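/- arXiv:2312.13854 — 5 statements merged into one kernel-verified Lean document; each statement's English description precedes it below -/
import Mathlib

section
/- Let L be a Lie superalgebra over a field of characteristic not 2 and f an odd linear map in the centroid of L. Then f ∘ f vanishes on [L,L]; in particular, if L = [L,L] then f ∘ f = 0. -/
universe u v

def sSign (F : Type u) [Field F] (a b : Bool) : F := if a && b then -1 else 1

structure LieSuperAlgebra (F : Type u) (L : Type v) [Field F] [AddCommGroup L]
    [Module F L] where
  br : L →ₗ[F] L →ₗ[F] L
  grade : Bool → Submodule F L
  sup_eq_top : grade false ⊔ grade true = ⊤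
  inf_eq_bot : grade false ⊓ grade true = ⊥
  br_mem : ∀ a b x y, x ∈ grade a → y ∈ grade b → br x y ∈ grade (xor a b)
  super_skew : ∀ a b x y, x ∈ grade a → y ∈ grade b →
    br x y = - sSign F a b • br y x
  super_jacobi : ∀ a b x y z, x ∈ grade a → y ∈ grade b →
    br x (br y z) = br (br x y) z + sSign F a b • br y (br x z)

variable {F : Type u} {L : Type v} [Field F] [AddCommGroup L] [Module F L]

namespace LieSuperAlgebra

/-- A graded ideal: closed under bracketing with arbitrary elements, and
spanned by its homogeneous parts. -/
def IsGradedIdeal (A : LieSuperAlgebra F L) (I : Submodule F L) : Prop :=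
  (∀ x y, y ∈ I → A.br x y ∈ I) ∧ I = (I ⊓ A.grade false) ⊔ (I ⊓ A.grade true)

/-- Simplicity: no graded ideals other than 0 and L, and nonabelian. -/
def IsSimple (A : LieSuperAlgebra F L) : Prop :=
  (∀ I : Submodule F L, A.IsGradedIdeal I → I = ⊥ ∨ I = ⊤) ∧ ∃ x y, A.br x y ≠ 0

def IsEven (A : LieSuperAlgebra F L) (f : L →ₗ[F] L) : Prop :=
  ∀ a x, x ∈ A.grade a → f x ∈ A.grade a

def IsOdd (A : LieSuperAlgebra F L) (f : L →ₗ[F] L) : Prop :=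
  ∀ a x, x ∈ A.grade a → f x ∈ A.grade (!a)

/-- Even centroid condition: f([x,y]) = [f x, y] = [x, f y]. -/
def InEvenCentroid (A : LieSuperAlgebra F L) (f : L →ₗ[F] L) : Prop :=
  A.IsEven f ∧ ∀ x y, f (A.br x y) = A.br (f x) y ∧ f (A.br x y) = A.br x (f y)

/-- Odd centroid condition: f([x,y]) = [f x, y] = (-1)^{|x|}[x, f y]. -/
def InOddCentroid (A : LieSuperAlgebra F L) (f : L →ₗ[F] L) : Prop :=
  A.IsOdd f ∧ ∀ a x y, x ∈ A.grade a →
    f (A.br x y) = A.br (f x) y ∧ f (A.br x y) = sSign F a true • A.br x (f y)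

/-- Membership in the centroid for a homogeneous map of parity `p`:
`f ∘ ad x = (-1)^{|f||x|} ad x ∘ f` for all homogeneous `x`. -/
def InCentroid (A : LieSuperAlgebra F L) (p : Bool) (f : L →ₗ[F] L) : Prop :=
  (∀ a x, x ∈ A.grade a → f x ∈ A.grade (xor a p)) ∧
  ∀ a x y, x ∈ A.grade a → f (A.br x y) = sSign F p a • A.br x (f y)

/-- A homogeneous skew-supersymmetric super-biderivation of parity `p`. -/
def IsSuperBiderivation (A : LieSuperAlgebra F L) (p : Bool)
    (φ : L →ₗ[F] L →ₗ[F] L) : Prop :=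
  (∀ a b x y, x ∈ A.grade a → y ∈ A.grade b →
      φ x y ∈ A.grade (xor (xor a b) p)) ∧
  (∀ a b x y, x ∈ A.grade a → y ∈ A.grade b →
      φ x y = - sSign F a b • φ y x) ∧
  (∀ a b x y z, x ∈ A.grade a → y ∈ A.grade b →
      φ x (A.br y z) = A.br (φ x y) z + sSign F (xor p a) b • A.br y (φ x z))

end LieSuperAlgebra

open LieSuperAlgebra

theorem odd_centroid_sq_vanishes_on_derived
    (hchar : ringChar F ≠ 2)
    (A : LieSuperAlgebra F L) (f : L →ₗ[F] L) (hf : A.InOddCentroid f) :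
    (∀ x y : L, f (f (A.br x y)) = 0) ∧
    (Submodule.span F {w : L | ∃ x y, w = A.br x y} = ⊤ →
      ∀ z : L, f (f z) = 0) := by
  have two_ne : (2 : F) ≠ 0 := Ring.two_ne_zero hchar
  have key : ∀ a x, x ∈ A.grade a → ∀ y, f (f (A.br x y)) = 0 := by
    intro a x hx y
    have hfx := hf.1 a x hx
    have h1 := (hf.2 a x y hx).1
    have h2 := (hf.2 a x y hx).2
    set B := A.br (f x) (f y) with hB
    have e1 : f (f (A.br x y)) = sSign F (!a) true • B := by
      rw [h1, (hf.2 (!a) (f x) y hfx).2]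
    have e2 : f (f (A.br x y)) = sSign F a true • B := by
      rw [h2, map_smul, (hf.2 a x (f y) hx).1]
    have hs : sSign F (!a) true = - sSign F a true := by
      cases a <;> simp [sSign]
    have hthis : -(sSign F a true • B) = sSign F a true • B := by
      rw [← neg_smul, ← hs, ← e1, e2]
    have h0 : (2 : F) • (sSign F a true • B) = 0 := by
      rw [two_smul]
      nth_rewrite 1 [← hthis]
      exact neg_add_cancel _
    have hz : sSign F a true • B = 0 := by
      rcases smul_eq_zero.mp h0 with h | h
      · exact absurd h two_ne
      · exact h
    rw [e2, hz]
  have main : ∀ x y : L, f (f (A.br x y)) = 0 := by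
    intro x y
    have hx : x ∈ A.grade false ⊔ A.grade true := by rw [A.sup_eq_top]; trivial
    obtain ⟨x0, hx0, x1, hx1, rfl⟩ := Submodule.mem_sup.mp hx
    have : A.br (x0 + x1) y = A.br x0 y + A.br x1 y := by
      rw [map_add]; rfl
    rw [this, map_add, map_add, key false x0 hx0 y, key true x1 hx1 y, add_zero]
  refine ⟨main, fun hspan z => ?_⟩
  have hle : (⊤ : Submodule F L) ≤ LinearMap.ker (f ∘ₗ f) := by
    rw [← hspan, Submodule.span_le]
    rintro w ⟨x, y, rfl⟩
    exact main x y
  exact hle trivial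
end

section
/- Let L be a finite-dimensional simple Lie superalgebra over an algebraically closed field F of characteristic not 2. Then the odd part of the centroid of L is zero: every odd linear map f : L → L satisfying f([x,y]) = [f(x),y] = (-1)^{|x|}[x,f(y)] for all homogeneous x,y is identically zero. -/
universe u v

variable {F : Type u} {L : Type v} [Field F] [AddCommGroup L] [Module F L]

open LieSuperAlgebra

theorem odd_centroid_eq_zero
    [IsAlgClosed F] [FiniteDimensional F L] (hchar : ringChar F ≠ 2)
    (A : LieSuperAlgebra F L) (hA : A.IsSimple)
    (f : L →ₗ[F] L) (hf : A.InOddCentroid f) :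
    f = 0 := by
  classical
  obtain ⟨hodd, hcen⟩ := hf
  have h2 : (2 : F) ≠ 0 := Ring.two_ne_zero hchar
  -- decomposition into homogeneous parts
  have hdec : ∀ x : L, ∃ x0 x1, x0 ∈ A.grade false ∧ x1 ∈ A.grade true ∧ x = x0 + x1 := by
    intro x
    have hx : x ∈ A.grade false ⊔ A.grade true := by rw [A.sup_eq_top]; trivial
    obtain ⟨x0, h0, x1, h1, hxe⟩ := Submodule.mem_sup.mp hx
    exact ⟨x0, x1, h0, h1, hxe.symm⟩
  -- bracket of images of homogeneous elements vanishes
  have hbz : ∀ a b x y, x ∈ A.grade a → y ∈ A.grade b → A.br (f x) (f y) = 0 := by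
    intro a b x y hx hy
    have e1 : f (A.br x y) = A.br (f x) y := (hcen a x y hx).1
    have e2 : f (A.br x y) = sSign F a true • A.br x (f y) := (hcen a x y hx).2
    have e3 : f (A.br (f x) y) = sSign F (!a) true • A.br (f x) (f y) :=
      (hcen (!a) (f x) y (hodd a x hx)).2
    have e4 : f (A.br x (f y)) = A.br (f x) (f y) := (hcen a x (f y) hx).1
    have e5 : sSign F (!a) true • A.br (f x) (f y)
        = sSign F a true • A.br (f x) (f y) := by
      rw [← e3, ← e1, e2, map_smul, e4]
    have e6 : (sSign F (!a) true - sSign F a true) • A.br (f x) (f y) = 0 := by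
      rw [sub_smul, e5, sub_self]
    have hne : sSign F (!a) true - sSign F a true ≠ 0 := by
      have hft : sSign F false true = 1 := rfl
      have htt : sSign F true true = -1 := rfl
      cases a
      · rw [Bool.not_false, htt, hft]; intro h; exact h2 (by linear_combination -h)
      · rw [Bool.not_true, hft, htt]; intro h; exact h2 (by linear_combination h)
    exact (smul_eq_zero.mp e6).resolve_left hne
  -- f² kills brackets of homogeneous elements
  have hf2h : ∀ a b x y, x ∈ A.grade a → y ∈ A.grade b → f (f (A.br x y)) = 0 := by
    intro a b x y hx hy
    rw [(hcen a x y hx).2, map_smul, (hcen a x (f y) hx).1, hbz a b x y hx hy, smul_zero]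
  -- f² kills all brackets
  have hf2 : ∀ x y, f (f (A.br x y)) = 0 := by
    intro x y
    obtain ⟨x0, x1, hx0, hx1, hxe⟩ := hdec x
    obtain ⟨y0, y1, hy0, hy1, hye⟩ := hdec y
    have e00 := hf2h false false x0 y0 hx0 hy0
    have e01 := hf2h false true x0 y1 hx0 hy1
    have e10 := hf2h true false x1 y0 hx1 hy0
    have e11 := hf2h true true x1 y1 hx1 hy1
    rw [hxe, hye]
    simp [map_add, LinearMap.add_apply, e00, e01, e10, e11]
  -- kernels of homogeneous maps are graded
  have hker_graded : ∀ (g : L →ₗ[F] L) (p : Bool),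
      (∀ a x, x ∈ A.grade a → g x ∈ A.grade (xor a p)) →
      LinearMap.ker g =
        (LinearMap.ker g ⊓ A.grade false) ⊔ (LinearMap.ker g ⊓ A.grade true) := by
    intro g p hg
    apply le_antisymm
    · intro x hx
      obtain ⟨x0, x1, h0, h1, hxe⟩ := hdec x
      have hgx : g x0 + g x1 = 0 := by
        rw [← map_add, ← hxe]; exact hx
      have hg0 : g x0 ∈ A.grade (xor false p) := hg false x0 h0
      have hg1 : g x1 ∈ A.grade (xor true p) := hg true x1 h1
      have h01 : g x0 = -g x1 := eq_neg_of_add_eq_zero_left hgx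
      have hbot : A.grade (xor false p) ⊓ A.grade (xor true p) = ⊥ := by
        cases p
        · exact A.inf_eq_bot
        · rw [show xor false true = true from rfl, show xor true true = false from rfl,
            inf_comm]
          exact A.inf_eq_bot
      have hmem : g x0 ∈ A.grade (xor false p) ⊓ A.grade (xor true p) :=
        ⟨hg0, h01 ▸ neg_mem hg1⟩
      rw [hbot] at hmem
      have hz0 : g x0 = 0 := hmem
      have hz1 : g x1 = 0 := by
        have := hgx; rw [hz0, zero_add] at this; exact this
      exact Submodule.mem_sup.mpr ⟨x0, ⟨hz0, h0⟩, x1, ⟨hz1, h1⟩, hxe.symm⟩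
    · exact sup_le inf_le_left inf_le_left
  -- ker (f ∘ f) is a graded ideal containing all brackets
  set K := LinearMap.ker (f ∘ₗ f) with hK
  have hKmem : ∀ x y, A.br x y ∈ K := by
    intro x y
    exact LinearMap.mem_ker.mpr (hf2 x y)
  have hKideal : A.IsGradedIdeal K := by
    constructor
    · intro x y _; exact hKmem x y
    · refine hker_graded (f ∘ₗ f) false ?_
      intro a x hx
      have := hodd (!a) (f x) (hodd a x hx)
      simpa [Bool.xor_false] using this
  obtain ⟨x₀, y₀, hxy₀⟩ := hA.2
  have hKtop : K = ⊤ := by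
    rcases hA.1 K hKideal with h | h
    · exfalso
      have := hKmem x₀ y₀
      rw [h, Submodule.mem_bot] at this
      exact hxy₀ this
    · exact h
  have hff : ∀ z : L, f (f z) = 0 := by
    intro z
    have : z ∈ K := by rw [hKtop]; trivial
    exact this
  -- ker f is a graded ideal
  have hkerf_ideal : A.IsGradedIdeal (LinearMap.ker f) := by
    constructor
    · intro x y hy
      obtain ⟨x0, x1, h0, h1, hxe⟩ := hdec x
      have hy0 : f y = 0 := hy
      have e0 : f (A.br x0 y) = 0 := by
        rw [(hcen false x0 y h0).2, hy0, map_zero, smul_zero]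
      have e1 : f (A.br x1 y) = 0 := by
        rw [(hcen true x1 y h1).2, hy0, map_zero, smul_zero]
      rw [hxe]
      refine LinearMap.mem_ker.mpr ?_
      simp [map_add, LinearMap.add_apply, e0, e1]
    · refine hker_graded f true ?_
      intro a x hx
      simpa [Bool.xor_true] using hodd a x hx
  rcases hA.1 (LinearMap.ker f) hkerf_ideal with h | h
  · ext z
    have hz : f z ∈ LinearMap.ker f := LinearMap.mem_ker.mpr (hff z)
    rw [h, Submodule.mem_bot] at hz
    exact hz
  · ext z
    have : z ∈ LinearMap.ker f := by rw [h]; trivial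
    exact this
end

section
/- Let L be a finite-dimensional simple Lie superalgebra over an algebraically closed field F of characteristic not 2. Then every skew-supersymmetric super-biderivation φ of L is inner: there exists λ ∈ F such that φ(x,y) = λ[x,y] for all x,y ∈ L. -/
universe u v

variable {F : Type u} {L : Type v} [Field F] [AddCommGroup L] [Module F L]

open LieSuperAlgebra


/-!
Brešar's method. Playing the super-biderivation rules for `φ` in both arguments against each
other gives `[φ(x,u), [y,v]] = ±[[x,u], φ(y,v)]`; since a simple Lie superalgebra has trivial
centre, this upgrades to `φ([x,u], z) = [φ(x,u), z]`. As `L = [L,L]` and `ad` is injective,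
there is then a linear `θ` with `θ([x,y]) = φ(x,y)`, and `θ` lies in the centroid with the
parity of `φ`. By Schur's lemma (eigenspaces of centroid elements are graded ideals) an even
centroid element is a scalar, while an odd one squares to zero, so its kernel is a nonzero
graded ideal and it vanishes.
-/

lemma sSign_ne_zero (a b : Bool) : sSign F a b ≠ 0 := by
  cases a <;> cases b <;> norm_num [sSign]

namespace LieSuperAlgebra

section Grading

variable (A : LieSuperAlgebra F L)

lemma exists_add_eq (z : L) : ∃ z₀ ∈ A.grade false, ∃ z₁ ∈ A.grade true, z₀ + z₁ = z :=
  Submodule.mem_sup.mp (A.sup_eq_top ▸ Submodule.mem_top)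

lemma eq_top_of_grade_le {S : Submodule F L} (h : ∀ a, A.grade a ≤ S) : S = ⊤ :=
  top_unique (A.sup_eq_top ▸ sup_le (h false) (h true))

lemma linearMap_ext {M : Type*} [AddCommGroup M] [Module F M] {f g : L →ₗ[F] M}
    (h : ∀ a x, x ∈ A.grade a → f x = g x) : f = g :=
  LinearMap.eqLocus_eq_top.mp (A.eq_top_of_grade_le fun a x hx => h a x hx)

lemma eq_zero_of_mem_grade_not {a : Bool} {x : L} (hx : x ∈ A.grade a)
    (hx' : x ∈ A.grade !a) : x = 0 := by
  have : x ∈ A.grade false ⊓ A.grade true := by cases a <;> exact ⟨‹_›, ‹_›⟩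
  simpa [A.inf_eq_bot] using this

lemma eq_zero_of_add_eq_zero {a : Bool} {x y : L} (hx : x ∈ A.grade a)
    (hy : y ∈ A.grade !a) (h : x + y = 0) : x = 0 ∧ y = 0 := by
  have hx₀ : x = 0 := A.eq_zero_of_mem_grade_not hx (eq_neg_of_add_eq_zero_left h ▸ neg_mem hy)
  exact ⟨hx₀, by simpa [hx₀] using h⟩

lemma mem_sup_inf_grade {I : Submodule F L} {t : Bool} {x : L} (hx : x ∈ I)
    (ht : x ∈ A.grade t) : x ∈ (I ⊓ A.grade false) ⊔ (I ⊓ A.grade true) := by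
  cases t
  · exact Submodule.mem_sup_left ⟨hx, ht⟩
  · exact Submodule.mem_sup_right ⟨hx, ht⟩

lemma ker_le_sup_inf_grade {f : L →ₗ[F] L} {q : Bool}
    (hf : ∀ a x, x ∈ A.grade a → f x ∈ A.grade (xor a q)) :
    LinearMap.ker f ≤ (LinearMap.ker f ⊓ A.grade false) ⊔ (LinearMap.ker f ⊓ A.grade true) := by
  intro z hz
  obtain ⟨z₀, h₀, z₁, h₁, rfl⟩ := A.exists_add_eq z
  rw [LinearMap.mem_ker, map_add] at hz
  obtain ⟨e₀, e₁⟩ :=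
    A.eq_zero_of_add_eq_zero (a := q) (by simpa using hf _ _ h₀) (by simpa using hf _ _ h₁) hz
  exact add_mem (A.mem_sup_inf_grade e₀ h₀) (A.mem_sup_inf_grade e₁ h₁)

lemma isGradedIdeal_of {I : Submodule F L}
    (hgr : I ≤ (I ⊓ A.grade false) ⊔ (I ⊓ A.grade true))
    (hbr : ∀ a b x y, x ∈ A.grade a → y ∈ A.grade b → y ∈ I → A.br x y ∈ I) :
    A.IsGradedIdeal I := by
  refine ⟨fun x y hy => ?_, le_antisymm hgr (sup_le inf_le_left inf_le_left)⟩
  obtain ⟨y₀, ⟨hy₀, hy₀'⟩, y₁, ⟨hy₁, hy₁'⟩, rfl⟩ := Submodule.mem_sup.mp (hgr hy)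
  have hle : ∀ a, A.grade a ≤ I.comap (A.br.flip (y₀ + y₁)) := fun a x hx => by
    simp only [Submodule.mem_comap, map_add]
    exact add_mem (hbr a false x y₀ hx hy₀' hy₀) (hbr a true x y₁ hx hy₁' hy₁)
  exact (A.eq_top_of_grade_le hle ▸ Submodule.mem_top : x ∈ I.comap _)

lemma br_eq_zero_of_homogeneous
    (h : ∀ a b x y, x ∈ A.grade a → y ∈ A.grade b → A.br x y = 0) : A.br = 0 :=
  A.linearMap_ext fun a x hx => A.linearMap_ext fun b y hy => by simpa using h a b x y hx hy

def homogeneousBrackets : Set L :=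
  {w | ∃ a b x y, x ∈ A.grade a ∧ y ∈ A.grade b ∧ A.br x y = w}

end Grading

section Simple

variable {A : LieSuperAlgebra F L}

lemma span_homogeneousBrackets_eq_top (hA : A.IsSimple) :
    Submodule.span F A.homogeneousBrackets = ⊤ := by
  set D := Submodule.span F A.homogeneousBrackets
  have hgen : ∀ a b x y, x ∈ A.grade a → y ∈ A.grade b → A.br x y ∈ D :=
    fun a b x y hx hy => Submodule.subset_span ⟨a, b, x, y, hx, hy, rfl⟩
  have hD : A.IsGradedIdeal D := by
    refine A.isGradedIdeal_of (Submodule.span_le.mpr ?_) fun a b x y hx hy _ => hgen a b x y hx hy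
    rintro _ ⟨a, b, x, y, hx, hy, rfl⟩
    exact A.mem_sup_inf_grade (hgen a b x y hx hy) (A.br_mem a b x y hx hy)
  refine (hA.1 D hD).resolve_left fun hbot => ?_
  obtain ⟨x, y, hxy⟩ := hA.2
  refine hxy (LinearMap.congr_fun₂ (A.br_eq_zero_of_homogeneous fun a b x y hx hy => ?_) x y)
  simpa [hbot] using hgen a b x y hx hy

lemma eq_top_of_br_mem (hA : A.IsSimple) {S : Submodule F L}
    (h : ∀ a b x y, x ∈ A.grade a → y ∈ A.grade b → A.br x y ∈ S) : S = ⊤ :=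
  top_unique <| span_homogeneousBrackets_eq_top hA ▸ Submodule.span_le.mpr
    fun _ ⟨a, b, x, y, hx, hy, hw⟩ => hw ▸ h a b x y hx hy

lemma linearMap_ext_of_br (hA : A.IsSimple) {M : Type*} [AddCommGroup M] [Module F M]
    {f g : L →ₗ[F] M} (h : ∀ a b x y, x ∈ A.grade a → y ∈ A.grade b → f (A.br x y) = g (A.br x y)) :
    f = g :=
  LinearMap.eqLocus_eq_top.mp (eq_top_of_br_mem hA h)

lemma ker_br_eq_bot (hA : A.IsSimple) : LinearMap.ker A.br = ⊥ := by
  have hgr : LinearMap.ker A.br ≤ (LinearMap.ker A.br ⊓ A.grade false) ⊔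
      (LinearMap.ker A.br ⊓ A.grade true) := by
    intro m hm
    obtain ⟨m₀, h₀, m₁, h₁, rfl⟩ := A.exists_add_eq m
    have hcomp : A.br m₀ = 0 ∧ A.br m₁ = 0 := by
      refine ⟨A.linearMap_ext fun c w hw => ?_, A.linearMap_ext fun c w hw => ?_⟩ <;>
      · have hsum : A.br m₀ w + A.br m₁ w = 0 := by
          simpa using LinearMap.congr_fun (LinearMap.mem_ker.mp hm) w
        have := A.eq_zero_of_add_eq_zero (a := c) (by simpa using A.br_mem _ _ _ _ h₀ hw)
          (by simpa using A.br_mem _ _ _ _ h₁ hw) hsum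
        simp [this]
    exact add_mem (A.mem_sup_inf_grade hcomp.1 h₀) (A.mem_sup_inf_grade hcomp.2 h₁)
  have hbr : ∀ a b x m, x ∈ A.grade a → m ∈ A.grade b → m ∈ LinearMap.ker A.br →
      A.br x m ∈ LinearMap.ker A.br := by
    intro a b x m hx hm hm₀
    refine LinearMap.mem_ker.mpr (A.linearMap_ext fun c w _ => ?_)
    have hJ := A.super_jacobi a b x m w hx hm
    rw [LinearMap.mem_ker.mp hm₀] at hJ
    simpa using hJ.symm
  refine (hA.1 _ (A.isGradedIdeal_of hgr hbr)).resolve_right fun htop => ?_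
  obtain ⟨x, y, hxy⟩ := hA.2
  exact hxy (by simp [LinearMap.mem_ker.mp (htop ▸ Submodule.mem_top : x ∈ LinearMap.ker A.br)])

lemma mem_grade_of_br_mem_grade (hA : A.IsSimple) {y : L} {s : Bool}
    (h : ∀ c z, z ∈ A.grade c → A.br y z ∈ A.grade (xor s c)) : y ∈ A.grade s := by
  have hcomp : ∀ {t : Bool} {u v : L}, u ∈ A.grade t → v ∈ A.grade !t →
      (∀ c z, z ∈ A.grade c → A.br (u + v) z ∈ A.grade (xor t c)) → v = 0 := by
    intro t u v hu hv huv
    refine LinearMap.ker_eq_bot.mp (ker_br_eq_bot hA) (A.linearMap_ext fun c z hz => ?_)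
    have hsub : A.br v z ∈ A.grade (xor t c) := by
      simpa using sub_mem (huv c z hz) (A.br_mem t c u z hu hz)
    simpa using A.eq_zero_of_mem_grade_not hsub (by simpa using A.br_mem _ c v z hv hz)
  obtain ⟨y₀, h₀, y₁, h₁, rfl⟩ := A.exists_add_eq y
  cases s
  · simpa [hcomp h₀ h₁ h] using h₀
  · simpa [hcomp h₁ h₀ (by simpa [add_comm] using h)] using h₁

end Simple

end LieSuperAlgebra

namespace LieSuperAlgebra

def brDefect (A : LieSuperAlgebra F L) (φ : L →ₗ[F] L →ₗ[F] L) (p t : Bool) (x u y v : L) : L :=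
  A.br (φ x u) (A.br y v) - sSign F p t • A.br (A.br x u) (φ y v)

namespace IsSuperBiderivation

variable {A : LieSuperAlgebra F L} {p : Bool} {φ : L →ₗ[F] L →ₗ[F] L}

lemma map_br_left (hφ : A.IsSuperBiderivation p φ) {a b c : Bool} {x y z : L}
    (hx : x ∈ A.grade a) (hy : y ∈ A.grade b) (hz : z ∈ A.grade c) :
    φ (A.br x y) z = sSign F b c • A.br (φ x z) y + sSign F p a • A.br x (φ y z) := by
  obtain ⟨-, skw, der⟩ := hφ
  have e := skw (xor a b) c (A.br x y) z (A.br_mem a b x y hx hy) hz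
  rw [der c a z x y hz hx, skw c a z x hz hx, skw c b z y hz hy] at e
  simp only [map_smul, map_neg, LinearMap.smul_apply, LinearMap.neg_apply, smul_add,
    smul_smul, smul_neg, neg_smul] at e
  rw [e]
  match_scalars <;> (cases p <;> cases a <;> cases b <;> cases c <;> norm_num [sSign])

lemma br_map_br_eq (hφ : A.IsSuperBiderivation p φ) {a b c d : Bool} {x y u v : L}
    (hx : x ∈ A.grade a) (hy : y ∈ A.grade b) (hu : u ∈ A.grade c) (hv : v ∈ A.grade d) :
    A.br (φ x u) (A.br y v) = sSign F p (xor a c) • A.br (A.br x u) (φ y v)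
      + (sSign F a b * sSign F a c * sSign F b c) • A.br (φ y u) (A.br x v)
      - (sSign F d b * sSign F d c) • A.br (φ x v) (A.br u y) := by
  have a₁ := hφ.2.2 (xor a b) c (A.br x y) u v (A.br_mem a b x y hx hy) hu
  rw [hφ.map_br_left hx hy hu, hφ.map_br_left hx hy hv] at a₁
  have b₁ := hφ.map_br_left hx hy (A.br_mem c d u v hu hv)
  rw [hφ.2.2 a c x u v hx hu, hφ.2.2 b c y u v hy hu] at b₁
  simp only [map_add, map_smul, LinearMap.add_apply, LinearMap.smul_apply, smul_add,
    smul_smul] at a₁ b₁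
  have jA := A.super_jacobi (xor (xor a c) p) b (φ x u) y v (hφ.1 a c x u hx hu) hy
  have sA := A.super_skew b (xor (xor (xor a c) p) d) y (A.br (φ x u) v) hy
    (A.br_mem _ d (φ x u) v (hφ.1 a c x u hx hu) hv)
  have jB := A.super_jacobi a (xor (xor b c) p) x (φ y u) v hx (hφ.1 b c y u hy hu)
  have jC := A.super_jacobi c (xor (xor a d) p) u (φ x v) y hu (hφ.1 a d x v hx hv)
  have jD := A.super_jacobi a c x u (φ y v) hx hu
  linear_combination (norm :=
      (match_scalars <;> (cases p <;> cases a <;> cases b <;> cases c <;> cases d <;>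
        norm_num [sSign])))
    jA - sSign F b c • a₁ + sSign F b c • b₁ + sSign F (xor (xor a c) p) b • sA
    + (sSign F b c * sSign F p a) • jB - (sSign F p c * sSign F a c * sSign F b d) • jC
    + (sSign F p a * sSign F p c) • jD

lemma brDefect_swap_right (hφ : A.IsSuperBiderivation p φ) {a b c d : Bool} {x y u v : L}
    (hx : x ∈ A.grade a) (hy : y ∈ A.grade b) (hu : u ∈ A.grade c) (hv : v ∈ A.grade d) :
    A.brDefect φ p (xor a c) x u y v
      = (sSign F b c * sSign F b d * sSign F c d) • A.brDefect φ p (xor a d) x v y u := by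
  have hR := hφ.br_map_br_eq hx hy hu hv
  have s₁ := A.super_skew (xor (xor b c) p) (xor a d) (φ y u) (A.br x v)
    (hφ.1 b c y u hy hu) (A.br_mem a d x v hx hv)
  have s₂ : A.br (φ x v) (A.br u y) = -sSign F c b • A.br (φ x v) (A.br y u) := by
    rw [A.super_skew c b u y hu hy]; simp
  simp only [brDefect]
  linear_combination (norm :=
      (match_scalars <;> (cases p <;> cases a <;> cases b <;> cases c <;> cases d <;>
        norm_num [sSign])))
    hR + (sSign F a b * sSign F a c * sSign F b c) • s₁ - (sSign F d b * sSign F d c) • s₂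

lemma brDefect_skew_left (hφ : A.IsSuperBiderivation p φ) {a c : Bool} {x u : L}
    (hx : x ∈ A.grade a) (hu : u ∈ A.grade c) (y v : L) :
    A.brDefect φ p (xor a c) x u y v = -sSign F a c • A.brDefect φ p (xor a c) u x y v := by
  have e₁ : A.br (φ x u) (A.br y v) = -sSign F a c • A.br (φ u x) (A.br y v) := by
    rw [hφ.2.1 a c x u hx hu]; simp
  have e₂ : A.br (A.br x u) (φ y v) = -sSign F a c • A.br (A.br u x) (φ y v) := by
    rw [A.super_skew a c x u hx hu]; simp
  simp only [brDefect]
  linear_combination (norm :=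
      (match_scalars <;> (cases p <;> cases a <;> cases c <;> norm_num [sSign])))
    e₁ - sSign F p (xor a c) • e₂

lemma brDefect_skew_right (hφ : A.IsSuperBiderivation p φ) {b d : Bool} {y v : L}
    (hy : y ∈ A.grade b) (hv : v ∈ A.grade d) (t : Bool) (x u : L) :
    A.brDefect φ p t x u y v = -sSign F b d • A.brDefect φ p t x u v y := by
  have e₁ : A.br (φ x u) (A.br y v) = -sSign F b d • A.br (φ x u) (A.br v y) := by
    rw [A.super_skew b d y v hy hv]; simp
  have e₂ : A.br (A.br x u) (φ y v) = -sSign F b d • A.br (A.br x u) (φ v y) := by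
    rw [hφ.2.1 b d y v hy hv]; simp
  simp only [brDefect]
  linear_combination (norm :=
      (match_scalars <;> (cases p <;> cases b <;> cases d <;> cases t <;> norm_num [sSign])))
    e₁ - sSign F p t • e₂

lemma brDefect_swap_pairs (hφ : A.IsSuperBiderivation p φ) {a b c d : Bool} {x y u v : L}
    (hx : x ∈ A.grade a) (hy : y ∈ A.grade b) (hu : u ∈ A.grade c) (hv : v ∈ A.grade d) :
    A.brDefect φ p (xor b d) y v x u
      = sSign F (xor a c) (xor b d) • A.brDefect φ p (xor a c) x u y v := by
  have s₁ := A.super_skew (xor (xor b d) p) (xor a c) (φ y v) (A.br x u)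
    (hφ.1 b d y v hy hv) (A.br_mem a c x u hx hu)
  have s₂ := A.super_skew (xor b d) (xor (xor a c) p) (A.br y v) (φ x u)
    (A.br_mem b d y v hy hv) (hφ.1 a c x u hx hu)
  simp only [brDefect]
  linear_combination (norm :=
      (match_scalars <;> (cases p <;> cases a <;> cases b <;> cases c <;> cases d <;>
        norm_num [sSign])))
    s₁ - sSign F p (xor b d) • s₂

lemma brDefect_eq_zero (hφ : A.IsSuperBiderivation p φ) (hchar : ringChar F ≠ 2)
    {a b c d : Bool} {x y u v : L}
    (hx : x ∈ A.grade a) (hy : y ∈ A.grade b) (hu : u ∈ A.grade c) (hv : v ∈ A.grade d) :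
    A.brDefect φ p (xor a c) x u y v = 0 := by
  -- Two chains of symmetries relate the defect to the one with `u` and `y` exchanged,
  -- with opposite signs.
  have chain₁ : A.brDefect φ p (xor a c) x u y v
      = sSign F b c • A.brDefect φ p (xor a b) x y u v := by
    have h₂ := hφ.brDefect_swap_right hu hy hx hv
    rw [Bool.xor_comm c a] at h₂
    rw [hφ.brDefect_skew_left hx hu, h₂, hφ.brDefect_swap_pairs hy hu hx hv,
      hφ.brDefect_skew_left hy hx, Bool.xor_comm b a]
    match_scalars
    cases p <;> cases a <;> cases b <;> cases c <;> cases d <;> norm_num [sSign]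
  have chain₂ : A.brDefect φ p (xor a c) x u y v
      = -sSign F b c • A.brDefect φ p (xor a b) x y u v := by
    rw [hφ.brDefect_swap_right hx hy hu hv, hφ.brDefect_skew_right hy hu (xor a d) x v,
      hφ.brDefect_swap_right hx hu hv hy]
    match_scalars
    cases p <;> cases a <;> cases b <;> cases c <;> cases d <;> norm_num [sSign]
  have h₂ : (2 * sSign F b c) • A.brDefect φ p (xor a b) x y u v = 0 := by
    linear_combination (norm := module) chain₁.symm.trans chain₂
  rw [chain₁, (smul_eq_zero.mp h₂).resolve_left
    (mul_ne_zero (Ring.two_ne_zero hchar) (sSign_ne_zero b c)), smul_zero]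

lemma br_map_br (hφ : A.IsSuperBiderivation p φ) (hchar : ringChar F ≠ 2)
    {a b c d : Bool} {x y u v : L}
    (hx : x ∈ A.grade a) (hy : y ∈ A.grade b) (hu : u ∈ A.grade c) (hv : v ∈ A.grade d) :
    A.br (φ x u) (A.br y v) = sSign F p (xor a c) • A.br (A.br x u) (φ y v) :=
  sub_eq_zero.mp (hφ.brDefect_eq_zero hchar hx hy hu hv)

lemma br_map_br_left_br (hφ : A.IsSuperBiderivation p φ) (hchar : ringChar F ≠ 2)
    {a c d e f : Bool} {x u z r s : L} (hx : x ∈ A.grade a) (hu : u ∈ A.grade c)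
    (hz : z ∈ A.grade d) (hr : r ∈ A.grade e) (hs : s ∈ A.grade f) :
    A.br (φ (A.br x u) z) (A.br r s)
      = A.br (φ x (A.br u z)) (A.br r s) - sSign F a c • A.br (φ u (A.br x z)) (A.br r s) := by
  have h₁ := hφ.br_map_br hchar (A.br_mem a c x u hx hu) hr hz hs
  rw [show A.br (A.br x u) z = A.br x (A.br u z) - sSign F a c • A.br u (A.br x z) by
    linear_combination (norm := module) -(A.super_jacobi a c x u z hx hu)] at h₁
  simp only [map_sub, map_smul, LinearMap.sub_apply, LinearMap.smul_apply, smul_sub,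
    smul_smul] at h₁
  have h₂ := hφ.br_map_br hchar hx hr (A.br_mem c d u z hu hz) hs
  have h₃ := hφ.br_map_br hchar hu hr (A.br_mem a d x z hx hz) hs
  linear_combination (norm :=
      (match_scalars <;> (cases p <;> cases a <;> cases c <;> cases d <;> norm_num [sSign])))
    h₁ - h₂ + sSign F a c • h₃

lemma br_map_br_left_br_eq (hφ : A.IsSuperBiderivation p φ) (hchar : ringChar F ≠ 2)
    {a c d e f : Bool} {x u z r s : L} (hx : x ∈ A.grade a) (hu : u ∈ A.grade c)
    (hz : z ∈ A.grade d) (hr : r ∈ A.grade e) (hs : s ∈ A.grade f) :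
    A.br (φ (A.br x u) z) (A.br r s) = A.br (A.br (φ x u) z) (A.br r s) := by
  -- Expanding the left side by Jacobi and by the derivation rule in the first argument, the
  -- sum of the two expansions is twice the right side.
  have h₁ := hφ.br_map_br_left_br hchar hx hu hz hr hs
  rw [hφ.2.2 a c x u z hx hu, hφ.2.2 c a u x z hu hx, hφ.2.1 c a u x hu hx] at h₁
  simp only [map_add, map_smul, map_neg, LinearMap.add_apply, LinearMap.smul_apply,
    LinearMap.neg_apply, smul_add, smul_smul, smul_neg, neg_smul] at h₁
  have h₂ : A.br (φ (A.br x u) z) (A.br r s) = sSign F c d • A.br (A.br (φ x z) u) (A.br r s)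
      + sSign F p a • A.br (A.br x (φ u z)) (A.br r s) := by
    rw [hφ.map_br_left hx hu hz]
    simp only [map_add, map_smul, LinearMap.add_apply, LinearMap.smul_apply]
  have h₃ : A.br (A.br u (φ x z)) (A.br r s)
      = -sSign F c (xor (xor a d) p) • A.br (A.br (φ x z) u) (A.br r s) := by
    rw [A.super_skew c _ u (φ x z) hu (hφ.1 a d x z hx hz)]
    simp only [map_smul, map_neg, LinearMap.smul_apply, LinearMap.neg_apply, neg_smul]
  have h₄ : (2 : F) • A.br (φ (A.br x u) z) (A.br r s)
      = (2 : F) • A.br (A.br (φ x u) z) (A.br r s) := by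
    linear_combination (norm :=
        (match_scalars <;> (cases p <;> cases a <;> cases c <;> cases d <;> norm_num [sSign])))
      h₁ + h₂ + sSign F (xor p a) c • h₃
  exact smul_right_injective L (Ring.two_ne_zero hchar) h₄

lemma map_br_left_eq (hφ : A.IsSuperBiderivation p φ) (hA : A.IsSimple)
    (hchar : ringChar F ≠ 2) {a c : Bool} {x u : L} (hx : x ∈ A.grade a) (hu : u ∈ A.grade c) :
    φ (A.br x u) = A.br (φ x u) :=
  A.linearMap_ext fun _ _ hz => LinearMap.ker_eq_bot.mp (ker_br_eq_bot hA) <|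
    linearMap_ext_of_br hA fun _ _ _ _ hr hs => hφ.br_map_br_left_br_eq hchar hx hu hz hr hs

lemma map_br_right_eq (hφ : A.IsSuperBiderivation p φ) (hA : A.IsSimple)
    (hchar : ringChar F ≠ 2) {a b d : Bool} {x y v : L} (hx : x ∈ A.grade a)
    (hy : y ∈ A.grade b) (hv : v ∈ A.grade d) :
    φ x (A.br y v) = sSign F p a • A.br x (φ y v) := by
  rw [hφ.2.1 a (xor b d) x (A.br y v) hx (A.br_mem b d y v hy hv),
    hφ.map_br_left_eq hA hchar hy hv,
    A.super_skew (xor (xor b d) p) a (φ y v) x (hφ.1 b d y v hy hv) hx]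
  simp only [smul_smul]
  match_scalars
  cases p <;> cases a <;> cases b <;> cases d <;> norm_num [sSign]

theorem exists_inCentroid (hφ : A.IsSuperBiderivation p φ) (hA : A.IsSimple)
    (hchar : ringChar F ≠ 2) :
    ∃ θ : L →ₗ[F] L, A.InCentroid p θ ∧ ∀ x y, θ (A.br x y) = φ x y := by
  have hinj : Function.Injective A.br := LinearMap.ker_eq_bot.mp (ker_br_eq_bot hA)
  have hrange : ∀ w, φ w ∈ LinearMap.range A.br := by
    have := eq_top_of_br_mem hA (S := (LinearMap.range A.br).comap φ) fun _ _ x u hx hu =>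
      ⟨φ x u, (hφ.map_br_left_eq hA hchar hx hu).symm⟩
    exact fun w => (this ▸ Submodule.mem_top : w ∈ (LinearMap.range A.br).comap φ)
  set θ := (LinearEquiv.ofInjective A.br hinj).symm.toLinearMap ∘ₗ φ.codRestrict _ hrange
  have hθ : ∀ w, A.br (θ w) = φ w := fun w => by
    simp [θ, ← LinearEquiv.ofInjective_apply A.br (h := hinj)]
  have hθbr : ∀ x y, θ (A.br x y) = φ x y := by
    have : A.br.compr₂ θ = φ := A.linearMap_ext fun _ x hx => A.linearMap_ext fun _ y hy =>
      hinj (by simpa [hθ] using hφ.map_br_left_eq hA hchar hx hy)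
    exact LinearMap.congr_fun₂ this
  refine ⟨θ, ⟨fun t w hw => mem_grade_of_br_mem_grade hA fun c z hz => ?_, fun a x w hx => ?_⟩,
    hθbr⟩
  · rw [hθ, show xor (xor t p) c = xor (xor t c) p by cases t <;> cases p <;> cases c <;> rfl]
    exact hφ.1 t c w z hw hz
  · have : θ ∘ₗ A.br x = sSign F p a • A.br x ∘ₗ θ := linearMap_ext_of_br hA fun _ _ y v hy hv => by
      simp [hθbr, hφ.map_br_right_eq hA hchar hx hy hv]
    exact LinearMap.congr_fun this w

end IsSuperBiderivation

namespace InCentroid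

variable {A : LieSuperAlgebra F L} {p : Bool} {f : L →ₗ[F] L}

lemma map_br_eq_br_map_left (hf : A.InCentroid p f) {a b : Bool} {x y : L}
    (hx : x ∈ A.grade a) (hy : y ∈ A.grade b) : f (A.br x y) = A.br (f x) y := by
  rw [A.super_skew a b x y hx hy, neg_smul, map_neg, map_smul, hf.2 b y x hy,
    A.super_skew b (xor a p) y (f x) hy (hf.1 a x hx)]
  simp only [smul_smul]
  match_scalars
  cases p <;> cases a <;> cases b <;> norm_num [sSign]

lemma isGradedIdeal_ker (hf : A.InCentroid p f) : A.IsGradedIdeal (LinearMap.ker f) :=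
  A.isGradedIdeal_of (A.ker_le_sup_inf_grade hf.1) fun a _ x y hx _ hy => by
    rw [LinearMap.mem_ker] at hy ⊢
    rw [hf.2 a x y hx, hy, map_zero, smul_zero]

lemma sub_smul_id (hf : A.InCentroid false f) (μ : F) :
    A.InCentroid false (f - μ • LinearMap.id) := by
  refine ⟨fun a x hx => ?_, fun a x y hx => by simp [hf.2 a x y hx, sSign]⟩
  have hfx := hf.1 a x hx
  simp only [Bool.xor_false] at hfx ⊢
  exact sub_mem hfx (Submodule.smul_mem _ μ hx)

lemma eq_smul_id [IsAlgClosed F] [FiniteDimensional F L] (hf : A.InCentroid false f)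
    (hA : A.IsSimple) : ∃ μ : F, f = μ • LinearMap.id := by
  have : Nontrivial L := let ⟨x, y, hxy⟩ := hA.2; ⟨⟨A.br x y, 0, hxy⟩⟩
  obtain ⟨μ, hμ⟩ := Module.End.exists_eigenvalue f
  obtain ⟨v, hv⟩ := hμ.exists_hasEigenvector
  refine ⟨μ, sub_eq_zero.mp (LinearMap.ker_eq_top.mp
    ((hA.1 _ (hf.sub_smul_id μ).isGradedIdeal_ker).resolve_left fun hbot => hv.2 ?_))⟩
  have hv' : v ∈ LinearMap.ker (f - μ • LinearMap.id) := by simp [hv.apply_eq_smul]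
  simpa [hbot] using hv'

lemma eq_zero (hf : A.InCentroid true f) (hA : A.IsSimple) (hchar : ringChar F ≠ 2) : f = 0 := by
  -- `f ∘ f` picks up the sign `(-1)^|x|` or `(-1)^(|x|+1)` on `[x, z]`, depending on the order
  -- in which the two factors of `f` are moved inside the bracket.
  have hbr : ∀ a b x z, x ∈ A.grade a → z ∈ A.grade b → A.br (f x) (f z) = 0 := by
    intro a b x z hx hz
    have h₁ : f (f (A.br x z)) = sSign F true a • A.br (f x) (f z) := by
      rw [hf.2 a x z hx, map_smul, hf.map_br_eq_br_map_left hx (hf.1 b z hz)]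
    have h₂ : f (f (A.br x z)) = sSign F true (!a) • A.br (f x) (f z) := by
      rw [hf.map_br_eq_br_map_left hx hz, hf.2 _ (f x) z (by simpa using hf.1 a x hx)]
    have h₃ : (2 : F) • A.br (f x) (f z) = 0 := by
      linear_combination (norm := (match_scalars; cases a <;> norm_num [sSign]))
        sSign F true a • (h₁.symm.trans h₂)
    exact (smul_eq_zero.mp h₃).resolve_left (Ring.two_ne_zero hchar)
  have hsq : f ∘ₗ f = 0 := linearMap_ext_of_br hA fun a b x z hx hz => by
    simp [hf.2 a x z hx, hf.map_br_eq_br_map_left hx (hf.1 b z hz), hbr a b x z hx hz]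
  rcases hA.1 _ hf.isGradedIdeal_ker with hbot | htop
  · ext w
    have hw : f w ∈ LinearMap.ker f := LinearMap.congr_fun hsq w
    simpa [hbot] using hw
  · exact LinearMap.ker_eq_top.mp htop

end InCentroid

end LieSuperAlgebra


theorem superBiderivation_is_inner
    [IsAlgClosed F] [FiniteDimensional F L] (hchar : ringChar F ≠ 2)
    (A : LieSuperAlgebra F L) (hA : A.IsSimple)
    (p : Bool) (φ : L →ₗ[F] L →ₗ[F] L) (hφ : A.IsSuperBiderivation p φ) :
    ∃ lam : F, ∀ x y : L, φ x y = lam • A.br x y := by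
  obtain ⟨θ, hθ, hθbr⟩ := hφ.exists_inCentroid hA hchar
  cases p
  · obtain ⟨μ, rfl⟩ := hθ.eq_smul_id hA
    exact ⟨μ, fun x y => by rw [← hθbr]; rfl⟩
  · exact ⟨0, fun x y => by rw [← hθbr, hθ.eq_zero hA hchar]; simp⟩
end

section
/- Let L be a finite-dimensional simple Lie algebra over an algebraically closed field F of characteristic not 2. Then every skew-symmetric biderivation φ : L × L → L (φ(x,y) = -φ(y,x) and φ(x,·), φ(·,y) are derivations) is of the form φ(x,y) = λ[x,y] for some λ ∈ F. -/
section Aux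

variable {L : Type*} [LieRing L]

theorem pureLie (a b c d p q r s : L)
    (h : ⁅⁅p,d⁆,c⁆+⁅⁅b,q⁆,c⁆+(⁅a,⁅r,d⁆⁆+⁅a,⁅b,s⁆⁆)
       = ⁅⁅p,c⁆,d⁆+⁅⁅a,r⁆,d⁆+(⁅b,⁅q,c⁆⁆+⁅b,⁅a,s⁆⁆)) :
    ⁅⁅a,b⁆,s⁆ - ⁅p,⁅c,d⁆⁆ = ⁅⁅a,d⁆,r⁆ + ⁅q,⁅b,c⁆⁆ := by
  have k1 : ⁅p,⁅d,c⁆⁆ = -⁅p,⁅c,d⁆⁆ := by rw [← lie_skew c d, lie_neg, neg_neg]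
  have k2 : ⁅a,⁅r,d⁆⁆ = -⁅a,⁅d,r⁆⁆ := by rw [← lie_skew d r, lie_neg, neg_neg]
  have k3 : ⁅d,⁅a,r⁆⁆ = -⁅a,⁅r,d⁆⁆ + ⁅r,⁅a,d⁆⁆ := by
    have hj := lie_jacobi d a r
    have h2 : ⁅r, ⁅d, a⁆⁆ = -⁅r,⁅a,d⁆⁆ := by rw [← lie_skew a d, lie_neg, neg_neg]
    linear_combination (norm := module) hj - h2
  have k4 : ⁅c,⁅p,d⁆⁆ = ⁅p,⁅c,d⁆⁆ + ⁅d,⁅p,c⁆⁆ := by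
    have hj := lie_jacobi c p d
    have h3 : ⁅d, ⁅c, p⁆⁆ = -⁅d,⁅p,c⁆⁆ := by rw [← lie_skew p c, lie_neg, neg_neg]
    linear_combination (norm := module) hj - k1 - h3
  simp only [lie_lie] at h ⊢
  linear_combination (norm := module) h - k1 - k2 + k3 - k4

end Aux

theorem skew_biderivation_is_inner
    {F L : Type*} [Field F] [IsAlgClosed F] (hchar : ringChar F ≠ 2)
    [LieRing L] [LieAlgebra F L] [Module.Finite F L] [LieAlgebra.IsSimple F L]
    (φ : L →ₗ[F] L →ₗ[F] L)
    (hskew : ∀ x y : L, φ x y = - φ y x)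
    (hder1 : ∀ y a b : L, φ ⁅a, b⁆ y = ⁅φ a y, b⁆ + ⁅a, φ b y⁆)
    (hder2 : ∀ x a b : L, φ x ⁅a, b⁆ = ⁅φ x a, b⁆ + ⁅a, φ x b⁆) :
    ∃ lam : F, ∀ x y : L, φ x y = lam • ⁅x, y⁆ := by
  classical
  -- characteristic ≠ 2 consequences
  have h2 : (2 : F) ≠ 0 := Ring.two_ne_zero hchar
  have torsion : ∀ g : L, g + g = 0 → g = 0 := by
    intro g hg
    have h2g : (2 : F) • g = 0 := by rw [two_smul]; exact hg
    rcases smul_eq_zero.mp h2g with h | h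
    · exact absurd h h2
    · exact h
  -- expansion of φ ⁅x,u⁆ ⁅y,v⁆ in two ways
  have expand : ∀ x y u v : L,
      ⁅⁅φ x y, v⁆, u⁆ + ⁅⁅y, φ x v⁆, u⁆ + (⁅x, ⁅φ u y, v⁆⁆ + ⁅x, ⁅y, φ u v⁆⁆)
    = ⁅⁅φ x y, u⁆, v⁆ + ⁅⁅x, φ u y⁆, v⁆ + (⁅y, ⁅φ x v, u⁆⁆ + ⁅y, ⁅x, φ u v⁆⁆) := by
    intro x y u v
    have h1 := hder1 ⁅y,v⁆ x u
    have hh2 := hder2 ⁅x,u⁆ y v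
    rw [hder2 x y v, hder2 u y v] at h1
    rw [hder1 y x u, hder1 v x u] at hh2
    simp only [add_lie, lie_add] at h1 hh2
    rw [h1] at hh2
    exact hh2
  have star : ∀ x y u v : L,
      ⁅⁅x,y⁆, φ u v⁆ - ⁅φ x y, ⁅u,v⁆⁆ = ⁅⁅x,v⁆, φ u y⁆ + ⁅φ x v, ⁅y,u⁆⁆ :=
    fun x y u v => pureLie x y u v (φ x y) (φ x v) (φ u y) (φ u v) (expand x y u v)
  -- Lemma A
  have starG : ∀ x y u v : L,
      ⁅⁅x,y⁆, φ u v⁆ - ⁅φ x y, ⁅u,v⁆⁆ = -(⁅⁅x,v⁆, φ y u⁆ - ⁅φ x v, ⁅y,u⁆⁆) := by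
    intro x y u v
    have hs := star x y u v
    rw [hskew y u]
    simp only [lie_neg]
    linear_combination (norm := module) hs
  have lemA : ∀ x y u v : L, ⁅φ x y, ⁅u,v⁆⁆ = ⁅⁅x,y⁆, φ u v⁆ := by
    intro x y u v
    have g1 := starG x y u v
    have g2 := starG x v y u
    have g3 := starG x u v y
    have key : ⁅⁅x,y⁆, φ u v⁆ - ⁅φ x y, ⁅u,v⁆⁆ = 0 := by
      apply torsion
      linear_combination (norm := module) g1 - g2 + g3
    linear_combination (norm := module) - key
  -- bilinear bracket and tensor maps
  let br : L →ₗ[F] L →ₗ[F] L :=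
    LinearMap.mk₂ F (fun x y => ⁅x,y⁆) (fun m n p => add_lie m n p)
      (fun c m n => smul_lie c m n) (fun m n p => lie_add m n p)
      (fun c m n => lie_smul c m n)
  let B : TensorProduct F L L →ₗ[F] L := TensorProduct.lift br
  let P : TensorProduct F L L →ₗ[F] L := TensorProduct.lift φ
  have hB : ∀ x y : L, B (x ⊗ₜ y) = ⁅x,y⁆ := fun x y => rfl
  have hP : ∀ x y : L, P (x ⊗ₜ y) = φ x y := fun x y => rfl
  -- B is surjective (perfectness)
  have hBsurj : Function.Surjective B := by
    let I : LieIdeal F L :=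
      { LinearMap.range B with
        lie_mem := fun {x m} _ => ⟨x ⊗ₜ m, hB x m⟩ }
    rcases LieAlgebra.IsSimple.eq_bot_or_eq_top I with hbot | htop
    · exfalso
      apply LieAlgebra.IsSimple.non_abelian (R := F) (L := L)
      constructor
      intro x y
      have hxy : (⁅x,y⁆ : L) ∈ I := ⟨x ⊗ₜ y, hB x y⟩
      rw [hbot] at hxy
      simpa using hxy
    · rw [← LinearMap.range_eq_top]
      have : I.toSubmodule = ⊤ := by rw [htop]; rfl
      exact this
  -- centerless
  have hcent : ∀ z : L, (∀ w : L, ⁅w, z⁆ = 0) → z = 0 := by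
    let J : LieIdeal F L :=
      { carrier := {z | ∀ w : L, ⁅w, z⁆ = 0}
        add_mem' := by intro a b ha hb; intro w; rw [lie_add, ha w, hb w, add_zero]
        zero_mem' := by intro w; exact lie_zero w
        smul_mem' := by intro c a ha; intro w; rw [lie_smul, ha w, smul_zero]
        lie_mem := by
          intro x m hm
          intro w
          rw [leibniz_lie w x m, hm ⁅w,x⁆, hm w, lie_zero, add_zero] }
    rcases LieAlgebra.IsSimple.eq_bot_or_eq_top J with hbot | htop
    · intro z hz
      have hzJ : z ∈ J := hz
      rw [hbot] at hzJ
      simpa using hzJ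
    · exfalso
      apply LieAlgebra.IsSimple.non_abelian (R := F) (L := L)
      constructor
      intro x y
      have hyJ : y ∈ J := by rw [htop]; trivial
      exact hyJ x
  -- Lemma A in tensor form
  have hPB : ∀ t s : TensorProduct F L L, ⁅P t, B s⁆ = ⁅B t, P s⁆ := by
    intro t s
    induction t using TensorProduct.induction_on with
    | zero => simp
    | tmul x y =>
      induction s using TensorProduct.induction_on with
      | zero => simp
      | tmul u v => rw [hB, hP, hB, hP]; exact lemA x y u v
      | add s1 s2 ih1 ih2 => rw [map_add, map_add, lie_add, lie_add, ih1, ih2]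
    | add t1 t2 ih1 ih2 => rw [map_add, map_add, add_lie, add_lie, ih1, ih2]
  -- ker B ≤ ker P
  have hkerB : ∀ t, B t = 0 → P t = 0 := by
    intro t ht
    apply hcent
    intro w
    obtain ⟨s, rfl⟩ := hBsurj w
    rw [← hPB s t, ht, lie_zero]
  -- construct T
  obtain ⟨g, hg⟩ := B.exists_rightInverse_of_surjective (LinearMap.range_eq_top.mpr hBsurj)
  set T : L →ₗ[F] L := P ∘ₗ g with hTdef
  have hT : ∀ t, T (B t) = P t := by
    intro t
    have h1 : B (g (B t) - t) = 0 := by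
      rw [map_sub, sub_eq_zero]
      exact LinearMap.congr_fun hg (B t)
    have hk := hkerB _ h1
    rw [map_sub, sub_eq_zero] at hk
    simpa [hTdef] using hk
  have hTb : ∀ x y : L, T ⁅x,y⁆ = φ x y := by
    intro x y
    rw [show (⁅x,y⁆ : L) = B (x ⊗ₜ y) from (hB x y).symm, hT]
    exact hP x y
  -- T is "symmetric": ⁅T a, b⁆ = ⁅a, T b⁆
  have hD : ∀ a b : L, ⁅T a, b⁆ = ⁅a, T b⁆ := by
    intro a b
    obtain ⟨t, rfl⟩ := hBsurj a
    obtain ⟨s, rfl⟩ := hBsurj b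
    rw [hT, hT]
    exact hPB t s
  -- Δ and its symmetries
  set Δ : L → L → L := fun a b => T ⁅a,b⁆ - ⁅T a, b⁆ with hΔdef
  have hΔskew : ∀ a b : L, Δ a b = - Δ b a := by
    intro a b
    have e1 : T ⁅a,b⁆ = - T ⁅b,a⁆ := by rw [← lie_skew b a, map_neg, neg_neg]
    have e2 : ⁅T a, b⁆ = - ⁅T b, a⁆ := by
      rw [hD a b, ← lie_skew (T b) a, neg_neg]
    show T ⁅a,b⁆ - ⁅T a, b⁆ = -(T ⁅b,a⁆ - ⁅T b, a⁆)
    linear_combination (norm := module) e1 - e2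
  have hsym : ∀ x a b : L, Δ ⁅x,a⁆ b = Δ ⁅x,b⁆ a := by
    intro x a b
    have base : T ⁅x, ⁅a,b⁆⁆ = ⁅T ⁅x,a⁆, b⁆ + ⁅a, T ⁅x,b⁆⁆ := by
      rw [hTb x ⁅a,b⁆, hder2 x a b, hTb x a, hTb x b]
    have jac : T ⁅x,⁅a,b⁆⁆ = T ⁅⁅x,a⁆,b⁆ + T ⁅a,⁅x,b⁆⁆ := by
      rw [← map_add, ← leibniz_lie]
    have hda : ⁅a, T ⁅x,b⁆⁆ = ⁅T a, ⁅x,b⁆⁆ := (hD a ⁅x,b⁆).symm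
    have hsum : Δ ⁅x,a⁆ b + Δ a ⁅x,b⁆ = 0 := by
      show (T ⁅⁅x,a⁆,b⁆ - ⁅T ⁅x,a⁆, b⁆) + (T ⁅a,⁅x,b⁆⁆ - ⁅T a, ⁅x,b⁆⁆) = 0
      linear_combination (norm := module) base - jac + hda
    have := hΔskew a ⁅x,b⁆
    calc Δ ⁅x,a⁆ b = -(Δ a ⁅x,b⁆) := by linear_combination (norm := module) hsum
    _ = Δ ⁅x,b⁆ a := by rw [this, neg_neg]
  have hanti : ∀ x a b : L, Δ ⁅x,a⁆ b = - Δ ⁅a,x⁆ b := by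
    intro x a b
    have hx : (⁅x,a⁆ : L) = -⁅a,x⁆ := by rw [← lie_skew a x, neg_neg]
    show T ⁅⁅x,a⁆,b⁆ - ⁅T ⁅x,a⁆, b⁆ = -(T ⁅⁅a,x⁆,b⁆ - ⁅T ⁅a,x⁆, b⁆)
    rw [hx]
    simp only [neg_lie, map_neg, lie_neg, neg_sub]
    linear_combination (norm := module)
  have heps : ∀ x a b : L, Δ ⁅x,a⁆ b = 0 := by
    intro x a b
    have c1 : Δ ⁅x,a⁆ b = - Δ ⁅x,a⁆ b := by
      calc Δ ⁅x,a⁆ b = Δ ⁅x,b⁆ a := hsym x a b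
      _ = - Δ ⁅b,x⁆ a := hanti x b a
      _ = - Δ ⁅b,a⁆ x := by rw [hsym b x a]
      _ = Δ ⁅a,b⁆ x := by rw [hanti b a x, neg_neg]
      _ = Δ ⁅a,x⁆ b := hsym a b x
      _ = - Δ ⁅x,a⁆ b := hanti a x b
    exact torsion _ (eq_neg_iff_add_eq_zero.mp c1)
  -- T is in the centroid
  have hcentroid : ∀ a b : L, T ⁅a,b⁆ = ⁅T a, b⁆ := by
    intro a b
    obtain ⟨t, rfl⟩ := hBsurj a
    have hΔ0 : Δ (B t) b = 0 := by
      induction t using TensorProduct.induction_on with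
      | zero => simp [hΔdef]
      | tmul x y => rw [hB]; exact heps x y b
      | add t1 t2 ih1 ih2 =>
        have : Δ (B t1 + B t2) b = Δ (B t1) b + Δ (B t2) b := by
          simp only [hΔdef, add_lie, map_add]
          abel
        rw [map_add, this, ih1, ih2, add_zero]
    have := hΔ0
    rw [hΔdef] at this
    exact sub_eq_zero.mp this
  have hcomm : ∀ a m : L, T ⁅a,m⁆ = ⁅a, T m⁆ := by
    intro a m
    rw [hcentroid, hD]
  -- eigenvalue argument
  have hnt : Nontrivial L := by
    by_contra h
    rw [not_nontrivial_iff_subsingleton] at h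
    exact LieAlgebra.IsSimple.non_abelian (R := F) (L := L)
      ⟨fun x y => Subsingleton.elim _ _⟩
  obtain ⟨lam, hlam⟩ := Module.End.exists_eigenvalue (T : Module.End F L)
  obtain ⟨v, hv⟩ := hlam.exists_hasEigenvector
  have hv1 : T v = lam • v := hv.apply_eq_smul
  have hv2 : v ≠ 0 := hv.2
  let K : LieIdeal F L :=
    { carrier := {m | T m = lam • m}
      add_mem' := by intro a b ha hb; show T (a + b) = lam • (a + b); rw [map_add, ha, hb, smul_add]
      zero_mem' := by show T 0 = lam • (0:L); simp
      smul_mem' := by intro c a ha; show T (c • a) = lam • (c • a); rw [map_smul, ha, smul_comm]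
      lie_mem := by
        intro x m hm
        show T ⁅x,m⁆ = lam • ⁅x,m⁆
        rw [hcomm, hm, lie_smul] }
  have hKne : K ≠ ⊥ := by
    intro hbot
    have hvK : v ∈ K := hv1
    rw [hbot] at hvK
    exact hv2 (by simpa using hvK)
  have hKtop : K = ⊤ := (LieAlgebra.IsSimple.eq_bot_or_eq_top K).resolve_left hKne
  refine ⟨lam, fun x y => ?_⟩
  have hmem : (⁅x,y⁆ : L) ∈ K := by rw [hKtop]; trivial
  have : T ⁅x,y⁆ = lam • ⁅x,y⁆ := hmem
  rw [← hTb x y]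
  exact this
end

section
/- Let L be a finite-dimensional simple Lie algebra over an algebraically closed field F of characteristic not 2. Then every linear commuting map f : L → L, i.e., a linear map with [f(x),x] = 0 for all x (equivalently [f(x),y] = [x,f(y)] for all x,y), is a scalar multiple of the identity. -/
/-!
Let `μ` be an eigenvalue of `f`. The identity `⁅f x, y⁆ = ⁅x, f y⁆` makes distinct generalized
eigenspaces of `f` commute, so the Lie subalgebra generated by the generalized `μ`-eigenspace is
an ideal, hence all of `L`, and every other generalized eigenspace is central, hence zero. So
`f - μ` is a nilpotent commuting map, and applying the next step to its last nonzero power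
shows that it vanishes.

A commuting map `M` with `M * M = 0` vanishes: `(x, y, z) ↦ ⁅M x, ⁅M y, z⁆⁆` is symmetric in
`x, y` and skew in `y, z`, hence zero as `2 ≠ 0`. From this, `M` kills every iterated bracket
`⁅aₖ, ⋯ ⁅a₁, M u⁆⋯⁆`, so the image of `M` lies in the largest ideal contained in `ker M`, and
simplicity leaves only `M = 0`.
-/

open Module End

theorem eq_zero_of_eq_neg {F M : Type*} [Field F] [AddCommGroup M] [Module F M]
    (h2 : (2 : F) ≠ 0) {a : M} (h : a = -a) : a = 0 := by
  have : (2 : F) • a = 0 := by rw [two_smul]; nth_rw 2 [h]; exact add_neg_cancel a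
  exact (smul_eq_zero_iff_right h2).mp this

namespace LieAlgebra

variable {F L : Type*} [Field F] [LieRing L] [LieAlgebra F L]

variable (F) in
theorem eq_zero_of_forall_lie_eq_zero [LieModule.IsFaithful F L L] {c : L}
    (h : ∀ y : L, ⁅y, c⁆ = 0) : c = 0 := by
  have : c ∈ center F L := (LieModule.mem_maxTrivSubmodule F L L c).mpr h
  simpa [center_eq_bot F L] using this

variable (F) in
/-- `adWord F [a₁, …, aₖ] = ad aₖ ∘ ⋯ ∘ ad a₁`. -/
def adWord (l : List L) : Module.End F L :=
  (l.map (ad F L)).reverse.prod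

@[simp]
theorem adWord_nil : adWord F ([] : List L) = 1 := rfl

@[simp]
theorem adWord_cons (a : L) (l : List L) : adWord F (a :: l) = adWord F l * ad F L a := by
  simp [adWord]

/-- The largest Lie ideal contained in `p`. -/
def lieCore (p : Submodule F L) : LieIdeal F L where
  toSubmodule := ⨅ l : List L, p.comap (adWord F l)
  lie_mem {x v} hv := by
    change v ∈ ⨅ l : List L, p.comap (adWord F l) at hv
    simp only [Submodule.mem_iInf, Submodule.mem_comap] at hv
    exact Submodule.mem_iInf _ |>.mpr fun l => by simpa using hv (x :: l)

theorem mem_lieCore {p : Submodule F L} {v : L} : v ∈ lieCore p ↔ ∀ l, adWord F l v ∈ p := by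
  simp [lieCore, ← LieSubmodule.mem_toSubmodule]

theorem lieCore_le (p : Submodule F L) : (lieCore p : Submodule F L) ≤ p :=
  fun _ hv => by simpa using mem_lieCore.mp hv []

def IsCommutingMap (f : Module.End F L) : Prop :=
  ∀ x y : L, ⁅f x, y⁆ = ⁅x, f y⁆

namespace IsCommutingMap

variable {f : Module.End F L}

theorem sub_smul_one (hf : IsCommutingMap f) (μ : F) : IsCommutingMap (f - μ • 1) := by
  intro x y
  simp only [LinearMap.sub_apply, LinearMap.smul_apply, Module.End.one_apply, sub_lie, lie_sub,
    smul_lie, lie_smul, hf x y]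

theorem pow (hf : IsCommutingMap f) : ∀ k : ℕ, IsCommutingMap (f ^ k)
  | 0, x, y => rfl
  | k + 1, x, y => by
    calc ⁅(f ^ (k + 1)) x, y⁆ = ⁅f ((f ^ k) x), y⁆ := by rw [pow_succ', mul_apply]
      _ = ⁅x, (f ^ k) (f y)⁆ := by rw [hf, pow hf k]
      _ = ⁅x, (f ^ (k + 1)) y⁆ := by rw [pow_succ, mul_apply]

theorem lie_apply_lie_apply_eq_zero (hf : IsCommutingMap f) (h2 : (2 : F) ≠ 0) (hsq : f * f = 0)
    (x y z : L) : ⁅f x, ⁅f y, z⁆⁆ = 0 := by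
  set G : L → L → L → L := fun x y z => ⁅f x, ⁅f y, z⁆⁆
  have symm : ∀ x y z, G x y z = G y x z := fun x y z => by
    have : ⁅f x, f y⁆ = 0 := by rw [hf, ← mul_apply, hsq, LinearMap.zero_apply, lie_zero]
    simp only [G, leibniz_lie (f x) (f y) z, this, zero_lie, zero_add]
  have skew : ∀ x y z, G x y z = -G x z y := fun x y z => by
    simp only [G]
    rw [hf y z, ← lie_skew (f z) y, lie_neg, neg_neg]
  apply eq_zero_of_eq_neg h2
  calc G x y z = G y x z := symm x y z
    _ = -G y z x := skew y x z
    _ = -G z y x := by rw [symm]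
    _ = G z x y := by rw [skew z y x, neg_neg]
    _ = G x z y := symm z x y
    _ = -G x y z := skew x z y

theorem apply_lie_apply_eq_zero [LieModule.IsFaithful F L L] (hf : IsCommutingMap f)
    (h2 : (2 : F) ≠ 0) (hsq : f * f = 0) (z x : L) : f ⁅z, f x⁆ = 0 :=
  eq_zero_of_forall_lie_eq_zero F fun y => by
    rw [← hf y, ← hf z x, hf.lie_apply_lie_apply_eq_zero h2 hsq]

theorem apply_adWord_apply_eq_zero [LieModule.IsFaithful F L L] (hf : IsCommutingMap f)
    (h2 : (2 : F) ≠ 0) (hsq : f * f = 0) (l : List L) (u : L) : f (adWord F l (f u)) = 0 := by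
  suffices key : ∀ (r : List L) (a u : L), f (adWord F (a :: r) (f u)) = 0 by
    cases l with
    | nil => simpa using congr($hsq u)
    | cons a r => exact key r a u
  intro r
  induction r with
  | nil => simpa using hf.apply_lie_apply_eq_zero h2 hsq
  | cons y r ih =>
    intro z u
    set W := f * adWord F r
    have hW : ∀ a u : L, W ⁅a, f u⁆ = 0 := by simpa [W] using ih
    have symm : W ⁅y, ⁅z, f u⁆⁆ = W ⁅z, ⁅y, f u⁆⁆ := by
      rw [← sub_eq_zero, ← map_sub, ← lie_lie, hW]
    have expand : ⁅y, ⁅z, f u⁆⁆ = ⁅y, f ⁅z, u⁆⁆ - ⁅z, ⁅y, f u⁆⁆ + ⁅z, f ⁅y, u⁆⁆ := by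
      rw [← hf z u, leibniz_lie y (f z) u, ← hf y z, lie_lie, hf y, hf y, hf z]
    have skew : W ⁅y, ⁅z, f u⁆⁆ = -W ⁅z, ⁅y, f u⁆⁆ := by
      rw [expand, map_add, map_sub, hW, hW, zero_sub, add_zero]
    have : W ⁅y, ⁅z, f u⁆⁆ = 0 := eq_zero_of_eq_neg h2 (skew.trans (congrArg Neg.neg symm.symm))
    simpa [W] using this

theorem eq_zero_of_mul_self_eq_zero [IsSimple F L] (hf : IsCommutingMap f) (h2 : (2 : F) ≠ 0)
    (hsq : f * f = 0) : f = 0 := by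
  have hrange : LinearMap.range f ≤ lieCore (LinearMap.ker f) := by
    rintro _ ⟨u, rfl⟩
    exact mem_lieCore.mpr fun l => hf.apply_adWord_apply_eq_zero h2 hsq l u
  rcases IsSimple.eq_bot_or_eq_top (lieCore (LinearMap.ker f)) with h | h
  · exact LinearMap.range_eq_bot.mp (by simpa [h] using hrange)
  · simpa [h] using lieCore_le (LinearMap.ker f)

theorem eq_zero_of_isNilpotent [IsSimple F L] (hf : IsCommutingMap f) (h2 : (2 : F) ≠ 0)
    (hnil : IsNilpotent f) : f = 0 := by
  obtain ⟨k, hk⟩ := hnil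
  replace hk : f ^ (k + 1) = 0 := pow_eq_zero_of_le k.le_succ hk
  induction k with
  | zero => simpa using hk
  | succ k ih =>
    refine ih ((hf.pow _).eq_zero_of_mul_self_eq_zero h2 ?_)
    rw [← pow_add, pow_eq_zero_of_le (by omega) hk]

theorem lie_eq_zero_of_mem_maxGenEigenspace (hf : IsCommutingMap f) {μ ν : F} (hμν : μ ≠ ν)
    {x y : L} (hx : x ∈ f.maxGenEigenspace μ) (hy : y ∈ f.maxGenEigenspace ν) : ⁅x, y⁆ = 0 := by
  obtain ⟨m, hm⟩ := (mem_maxGenEigenspace f μ x).mp hx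
  obtain ⟨n, hn⟩ := (mem_maxGenEigenspace f ν y).mp hy
  clear hx hy
  induction m generalizing x n y with
  | zero => simp_all
  | succ m ihm =>
    induction n generalizing y with
    | zero => simp_all
    | succ n ihn =>
      rw [pow_succ, Module.End.mul_apply] at hm hn
      have hfx : ⁅f x, y⁆ = μ • ⁅x, y⁆ := by
        have := ihm hm (n + 1) (by rwa [pow_succ])
        rwa [LinearMap.sub_apply, sub_lie, sub_eq_zero, LinearMap.smul_apply, one_apply,
          smul_lie] at this
      have hfy : ⁅x, f y⁆ = ν • ⁅x, y⁆ := by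
        have := ihn hn
        rwa [LinearMap.sub_apply, lie_sub, sub_eq_zero, LinearMap.smul_apply, one_apply,
          lie_smul] at this
      have : (μ - ν) • ⁅x, y⁆ = 0 := by rw [sub_smul, ← hfx, ← hfy, hf, sub_self]
      exact (smul_eq_zero_iff_right (sub_ne_zero.mpr hμν)).mp this

theorem lie_eq_zero_of_mem_lieSpan_maxGenEigenspace (hf : IsCommutingMap f) {μ ν : F}
    (hνμ : ν ≠ μ) {b s : L} (hb : b ∈ f.maxGenEigenspace ν)
    (hs : s ∈ LieSubalgebra.lieSpan F L (f.maxGenEigenspace μ)) : ⁅b, s⁆ = 0 := by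
  induction hs using LieSubalgebra.lieSpan_induction with
  | mem s hs => exact hf.lie_eq_zero_of_mem_maxGenEigenspace hνμ hb hs
  | zero => exact lie_zero b
  | add s t _ _ hs ht => rw [lie_add, hs, ht, add_zero]
  | smul c s _ hs => rw [lie_smul, hs, smul_zero]
  | lie s t _ _ hs ht => rw [leibniz_lie, hs, ht, zero_lie, lie_zero, add_zero]

variable [IsAlgClosed F] [FiniteDimensional F L]

theorem exists_lieIdeal_coe_eq_lieSpan_maxGenEigenspace (hf : IsCommutingMap f) (μ : F) :
    ∃ I : LieIdeal F L,
      (I : LieSubalgebra F L) = LieSubalgebra.lieSpan F L (f.maxGenEigenspace μ) := by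
  set S := LieSubalgebra.lieSpan F L (f.maxGenEigenspace μ)
  refine (LieSubalgebra.exists_lieIdeal_coe_eq_iff (K := S)).mpr fun x s hs => ?_
  have hx : x ∈ ⨆ ν, f.maxGenEigenspace ν := by
    rw [iSup_maxGenEigenspace_eq_top]; trivial
  refine Submodule.iSup_induction _ (motive := fun x => ⁅x, s⁆ ∈ S) hx (fun ν x hx => ?_)
    (by simp) (fun x y hx hy => by simpa only [add_lie] using S.add_mem hx hy)
  by_cases hν : ν = μ
  · subst hν; exact S.lie_mem (LieSubalgebra.subset_lieSpan hx) hs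
  · simp [hf.lie_eq_zero_of_mem_lieSpan_maxGenEigenspace hν hx hs]

theorem maxGenEigenspace_eq_top [IsSimple F L] (hf : IsCommutingMap f) {μ : F}
    (hμ : f.HasEigenvalue μ) : f.maxGenEigenspace μ = ⊤ := by
  obtain ⟨I, hI⟩ := hf.exists_lieIdeal_coe_eq_lieSpan_maxGenEigenspace μ
  have hI_top : I = ⊤ := by
    refine (IsSimple.eq_bot_or_eq_top I).resolve_left fun hI_bot => ?_
    obtain ⟨v, hv⟩ := hμ.exists_hasEigenvector
    have : v ∈ I := by
      rw [← LieIdeal.mem_toLieSubalgebra, hI]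
      exact LieSubalgebra.subset_lieSpan (eigenspace_le_maxGenEigenspace hv.1)
    exact hv.2 (by simpa [hI_bot] using this)
  have hV : ∀ ν ≠ μ, f.maxGenEigenspace ν = ⊥ := fun ν hν => eq_bot_iff.mpr fun b hb =>
    eq_zero_of_forall_lie_eq_zero F fun y => by
      have hy : y ∈ LieSubalgebra.lieSpan F L (f.maxGenEigenspace μ) := by
        rw [← hI, hI_top]; trivial
      rw [← lie_skew, hf.lie_eq_zero_of_mem_lieSpan_maxGenEigenspace hν hb hy, neg_zero]
  rw [eq_top_iff, ← iSup_maxGenEigenspace_eq_top f]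
  refine iSup_le fun ν => ?_
  by_cases hν : ν = μ
  · rw [hν]
  · simp [hV ν hν]

end IsCommutingMap

end LieAlgebra

theorem commuting_map_is_scalar
    {F L : Type*} [Field F] [IsAlgClosed F] (hchar : ringChar F ≠ 2)
    [LieRing L] [LieAlgebra F L] [Module.Finite F L] [LieAlgebra.IsSimple F L]
    (f : L →ₗ[F] L)
    (hcomm : ∀ x y : L, ⁅f x, y⁆ = ⁅x, f y⁆) :
    ∃ lam : F, ∀ x : L, f x = lam • x := by
  have := LieAlgebra.IsSimple.nontrivial F L
  have hf : LieAlgebra.IsCommutingMap f := hcomm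
  obtain ⟨μ, hμ⟩ := Module.End.exists_eigenvalue f
  have hnil : IsNilpotent (f - μ • 1) := by
    refine ⟨finrank F L, LinearMap.ker_eq_top.mp ?_⟩
    rw [← genEigenspace_nat, ← maxGenEigenspace_eq_genEigenspace_finrank,
      hf.maxGenEigenspace_eq_top hμ]
  have h0 := (hf.sub_smul_one μ).eq_zero_of_isNilpotent (Ring.two_ne_zero hchar) hnil
  exact ⟨μ, fun x => by simpa [sub_eq_zero] using congr($h0 x)⟩
end
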